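/- arXiv:1506.03260 — 5 statements merged into one kernel-verified Lean document; each statement's English description precedes it below -/
import Mathlib

section
/- Let X, Y be normed spaces, V : X → Y a bounded linear operator, and {V_ν}_{ν ∈ N} a finite family of bounded linear operators from X to Y with |N| elements. Then for any n ∈ ℕ, e_{n + ⌊log₂|N|⌋ + 1}(V) ≤ sup_{ν ∈ N} e_n(V_ν) + sup_{x ∈ B_X} inf_{ν ∈ N} ‖Vx − V_ν x‖_Y. -/
open Set Metric

/-- The `k`-th entropy number of a continuous linear operator `T : X → Y`. -/
noncomputable def entropyNumber {X Y : Type*} [NormedAddCommGroup X] [NormedSpace ℝ X]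
    [NormedAddCommGroup Y] [NormedSpace ℝ Y] (T : X →L[ℝ] Y) (k : ℕ) : ℝ :=
  sInf {ε : ℝ | 0 < ε ∧ ∃ y : Fin (2 ^ (k - 1)) → Y,
    (⇑T) '' Metric.closedBall 0 1 ⊆ ⋃ i, Metric.closedBall (y i) ε}

/-!
Cover each `V_ν(B_X)` by `2^(n-1)` balls of radius slightly above `e_n(V_ν)`. Every point
`Vx` lies within `b = sup_x inf_ν ‖Vx - V_ν x‖` of some `V_ν x`, so enlarging all these balls by
`b` covers `V(B_X)` with `|N| · 2^(n-1) ≤ 2^(n + ⌊log₂|N|⌋)` balls. For `n = 0` the convention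
`2^(0-1) = 1` would leave `|N|` balls; there the symmetry of `V_ν(B_X)` centres each single ball
at the origin, so one ball suffices.
-/

theorem Set.subset_closedBall_zero_of_neg_mem {E : Type*} [SeminormedAddCommGroup E]
    [NormedSpace ℝ E] {s : Set E} (hs : ∀ y ∈ s, -y ∈ s) {c : E} {r : ℝ}
    (h : s ⊆ closedBall c r) : s ⊆ closedBall 0 r := by
  intro y hy
  have h₁ : ‖y - c‖ ≤ r := mem_closedBall_iff_norm.mp (h hy)
  have h₂ : ‖-y - c‖ ≤ r := mem_closedBall_iff_norm.mp (h (hs y hy))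
  have htwo : (2 : ℝ) • y = (y - c) - (-y - c) := by rw [two_smul]; abel
  have : 2 * ‖y‖ ≤ 2 * r := by
    calc 2 * ‖y‖ = ‖(y - c) - (-y - c)‖ := by rw [← htwo, norm_smul, Real.norm_two]
      _ ≤ ‖y - c‖ + ‖-y - c‖ := norm_sub_le _ _
      _ ≤ 2 * r := by linarith
  rw [mem_closedBall_zero_iff]
  linarith

theorem Set.image_subset_iUnion_closedBall_of_dist_le {α ι κ M : Type*} [PseudoMetricSpace M]
    {s : Set α} {f : α → M} {g : ι → α → M} {c : ι → κ → M} {r b : ℝ}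
    (hg : ∀ ν, g ν '' s ⊆ ⋃ i, closedBall (c ν i) r)
    (hfg : ∀ x ∈ s, ∃ ν, dist (f x) (g ν x) ≤ b) :
    f '' s ⊆ ⋃ p : ι × κ, closedBall (c p.1 p.2) (r + b) := by
  rintro _ ⟨x, hx, rfl⟩
  obtain ⟨ν, hν⟩ := hfg x hx
  obtain ⟨i, hi⟩ := mem_iUnion.mp (hg ν (mem_image_of_mem _ hx))
  refine mem_iUnion.mpr ⟨(ν, i), ?_⟩
  rw [mem_closedBall] at hi ⊢
  linarith [dist_triangle (f x) (g ν x) (c ν i)]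

section EntropyNumber

variable {X Y : Type*} [NormedAddCommGroup X] [NormedSpace ℝ X]
  [NormedAddCommGroup Y] [NormedSpace ℝ Y]

theorem neg_mem_image_closedBall (T : X →L[ℝ] Y) :
    ∀ y ∈ T '' closedBall 0 1, -y ∈ T '' closedBall 0 1 := by
  rintro _ ⟨x, hx, rfl⟩
  exact ⟨-x, by simpa using hx, map_neg T x⟩

theorem entropyNumber_nonneg (T : X →L[ℝ] Y) (k : ℕ) : 0 ≤ entropyNumber T k :=
  Real.sInf_nonneg fun _ hε => hε.1.le

theorem entropyNumber_le_of_image_subset {κ : Type*} [Fintype κ] (T : X →L[ℝ] Y) {k : ℕ}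
    (hκ : Fintype.card κ ≤ 2 ^ (k - 1)) {r : ℝ} (hr : 0 < r) (c : κ → Y)
    (hT : T '' closedBall 0 1 ⊆ ⋃ i, closedBall (c i) r) :
    entropyNumber T k ≤ r := by
  obtain ⟨e⟩ : Nonempty (κ ↪ Fin (2 ^ (k - 1))) :=
    Function.Embedding.nonempty_of_card_le (by simpa using hκ)
  refine csInf_le ⟨0, fun _ hε => hε.1.le⟩
    ⟨hr, Function.extend e c 0, hT.trans (iUnion_subset fun i => ?_)⟩
  rw [← e.injective.extend_apply c 0 i]
  exact subset_iUnion (fun j => closedBall (Function.extend e c 0 j) r) (e i)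

theorem entropyNumber_le_of_image_subset_closedBall (T : X →L[ℝ] Y) (k : ℕ) {r : ℝ}
    (hr : 0 < r) {c : Y} (hT : T '' closedBall 0 1 ⊆ closedBall c r) :
    entropyNumber T k ≤ r :=
  entropyNumber_le_of_image_subset (κ := Unit) T (by simpa using Nat.one_le_two_pow) hr
    (fun _ => c) (by rwa [iUnion_const])

theorem exists_cover_of_entropyNumber_lt {T : X →L[ℝ] Y} {k : ℕ} {r : ℝ}
    (hr : entropyNumber T k < r) :
    ∃ c : Fin (2 ^ (k - 1)) → Y, T '' closedBall 0 1 ⊆ ⋃ i, closedBall (c i) r := by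
  have hne : {ε : ℝ | 0 < ε ∧ ∃ y : Fin (2 ^ (k - 1)) → Y,
      T '' closedBall 0 1 ⊆ ⋃ i, closedBall (y i) ε}.Nonempty := by
    refine ⟨‖T‖ + 1, by positivity, fun _ => 0, ?_⟩
    rintro _ ⟨x, hx, rfl⟩
    refine mem_iUnion.mpr ⟨⟨0, Nat.two_pow_pos _⟩, mem_closedBall_zero_iff.mpr ?_⟩
    linarith [T.le_opNorm_of_le (mem_closedBall_zero_iff.mp hx)]
  obtain ⟨ε, ⟨-, c, hc⟩, hεr⟩ := exists_lt_of_csInf_lt hne hr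
  exact ⟨c, hc.trans (iUnion_mono fun i => closedBall_subset_closedBall hεr.le)⟩

theorem entropyNumber_le_of_forall_exists_norm_sub_le {ι : Type*} [Fintype ι]
    (V : X →L[ℝ] Y) (Vf : ι → X →L[ℝ] Y) (n : ℕ) {r b : ℝ}
    (hr : ∀ ν, entropyNumber (Vf ν) n < r)
    (hb : ∀ x ∈ closedBall (0 : X) 1, ∃ ν, ‖V x - Vf ν x‖ ≤ b) :
    entropyNumber V (n + Nat.log 2 (Fintype.card ι) + 1) ≤ r + b := by
  obtain ⟨ν₀, hν₀⟩ := hb 0 (mem_closedBall_self zero_le_one)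
  have hrb : 0 < r + b := by
    linarith [entropyNumber_nonneg (Vf ν₀) n, hr ν₀, norm_nonneg (V 0 - Vf ν₀ 0)]
  have hdist : ∀ x ∈ closedBall (0 : X) 1, ∃ ν, dist (V x) (Vf ν x) ≤ b := by
    simpa only [dist_eq_norm] using hb
  choose c hc using fun ν => exists_cover_of_entropyNumber_lt (hr ν)
  rcases n with _ | m
  · have hc₀ : ∀ ν, Vf ν '' closedBall 0 1 ⊆ ⋃ _ : Unit, closedBall 0 r := fun ν => by
      rw [iUnion_const]
      refine subset_closedBall_zero_of_neg_mem (neg_mem_image_closedBall _) (c := c ν 0) ?_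
      have h0 : ∀ i : Fin (2 ^ (0 - 1)), i = 0 := fun i => Fin.ext (by simp)
      exact (hc ν).trans (iUnion_subset fun i => by rw [h0 i])
    exact entropyNumber_le_of_image_subset_closedBall V _ hrb
      ((image_subset_iUnion_closedBall_of_dist_le hc₀ hdist).trans
        (iUnion_subset fun _ => le_rfl))
  · have hcard : Fintype.card (ι × Fin (2 ^ m)) ≤
        2 ^ (m + 1 + Nat.log 2 (Fintype.card ι) + 1 - 1) := by
      calc Fintype.card (ι × Fin (2 ^ m)) = Fintype.card ι * 2 ^ m := by simp
        _ ≤ 2 ^ (Nat.log 2 (Fintype.card ι) + 1) * 2 ^ m :=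
          Nat.mul_le_mul_right _ (Nat.lt_pow_succ_log_self one_lt_two _).le
        _ = _ := by rw [← pow_add]; congr 1; omega
    exact entropyNumber_le_of_image_subset V hcard hrb _
      (image_subset_iUnion_closedBall_of_dist_le hc hdist)

end EntropyNumber

theorem exists_le_ciSup_ciInf {α ι : Type*} [Finite ι] [Nonempty ι] {g : α → ι → ℝ}
    (hg : BddAbove (range fun x => ⨅ ν, g x ν)) (x : α) :
    ∃ ν, g x ν ≤ ⨆ x, ⨅ ν, g x ν := by
  obtain ⟨ν, hν⟩ := exists_eq_ciInf_of_finite (f := g x)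
  exact ⟨ν, hν ▸ le_ciSup hg x⟩

/-- Lifshits' lemma: for a finite family `{V_ν}_{ν ∈ N}` of operators,
`e_{n + ⌊log₂ |N|⌋ + 1}(V) ≤ sup_ν e_n(V_ν) + sup_{x ∈ B_X} inf_ν ‖Vx − V_ν x‖`. -/
theorem entropyNumber_finite_family {X Y : Type*}
    [NormedAddCommGroup X] [NormedSpace ℝ X]
    [NormedAddCommGroup Y] [NormedSpace ℝ Y]
    {ι : Type*} [Fintype ι] [Nonempty ι]
    (V : X →L[ℝ] Y) (Vf : ι → X →L[ℝ] Y) (n : ℕ) :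
    entropyNumber V (n + Nat.log 2 (Fintype.card ι) + 1) ≤
      (⨆ ν : ι, entropyNumber (Vf ν) n) +
        ⨆ x : Metric.closedBall (0 : X) 1, ⨅ ν : ι, ‖V x - Vf ν x‖ := by
  obtain ⟨ν₀⟩ := ‹Nonempty ι›
  have hbdd : BddAbove (range fun x : closedBall (0 : X) 1 => ⨅ ν, ‖V x - Vf ν x‖) := by
    refine ⟨‖V - Vf ν₀‖, ?_⟩
    rintro _ ⟨x, rfl⟩
    refine (ciInf_le ⟨0, ?_⟩ ν₀).trans
      (by simpa using (V - Vf ν₀).le_opNorm_of_le (mem_closedBall_zero_iff.mp x.2))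
    rintro _ ⟨ν, rfl⟩
    exact norm_nonneg _
  have hb : ∀ x ∈ closedBall (0 : X) 1, ∃ ν, ‖V x - Vf ν x‖ ≤
      ⨆ x : closedBall (0 : X) 1, ⨅ ν, ‖V x - Vf ν x‖ :=
    fun x hx => exists_le_ciSup_ciInf hbdd ⟨x, hx⟩
  rw [← sub_le_iff_le_add]
  refine le_of_forall_gt_imp_ge_of_dense fun r hr => sub_le_iff_le_add.mpr ?_
  refine entropyNumber_le_of_forall_exists_norm_sub_le V Vf n (fun ν => ?_) hb
  exact (le_ciSup (finite_range _).bddAbove ν).trans_lt hr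
end

section
/- Let 1 ≤ p < q < ∞, and let {ε_t}_{t=t₁}^{t₂} be nonnegative reals with ∑_t ε_t ≤ 1, and n ∈ ℕ with n ≥ 1. Define n_t = ⌈n · 2^{−t} ε_t⌉ if ε_t > 0 and n_t = 1 if ε_t = 0. Then ∑_{t=t₁}^{t₂} 2^{t(1 − q/p)} ε_t^{q/p} n_t^{1 − q/p} ≤ C(p,q) (n^{1 − q/p} + 2^{t₁ (1 − q/p)}). -/
/-!
Write `β = 1 - q/p < 0` and `x_t = n 2^{-t} ε_t`. When `x_t ≥ 1` we have `n_t ≥ x_t`, and since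
`β < 0` the `t`-th term is at most its value at `n_t = x_t`, which is exactly `n^β ε_t`; these
terms add up to at most `n^β` because `∑ ε_t ≤ 1`. Otherwise `n_t = 1` and the term is at most
`2^{tβ}`, and these form a geometric series bounded by `2^{t₁β} / (1 - 2^β)`.
-/

open Finset Real

/-- The `t`-th summand `a^{1-α} e^α m^{1-α}`, with `a = 2^t`, `e = ε_t`, `m = n_t`, `α = q/p`. -/
noncomputable def weightedTerm (α a e m : ℝ) : ℝ := a ^ (1 - α) * e ^ α * m ^ (1 - α)

section WeightedTerm

variable {α a e n : ℝ}

lemma weightedTerm_zero_left (hα : α ≠ 0) (a m : ℝ) : weightedTerm α a 0 m = 0 := by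
  simp [weightedTerm, zero_rpow hα]

lemma weightedTerm_mul_inv_mul_eq (ha : 0 < a) (hn : 0 ≤ n) (he : 0 < e) :
    weightedTerm α a e (n * a⁻¹ * e) = n ^ (1 - α) * e := by
  have hsplit : (n * a⁻¹ * e) ^ (1 - α) = n ^ (1 - α) * (a ^ (1 - α))⁻¹ * e ^ (1 - α) := by
    rw [mul_rpow (by positivity) he.le, mul_rpow hn (by positivity), inv_rpow ha.le]
  have he_pow : e ^ α * e ^ (1 - α) = e := by
    rw [← rpow_add he, add_sub_cancel, rpow_one]
  have ha_ne : a ^ (1 - α) ≠ 0 := (rpow_pos_of_pos ha _).ne'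
  calc weightedTerm α a e (n * a⁻¹ * e)
      = n ^ (1 - α) * (e ^ α * e ^ (1 - α)) * (a ^ (1 - α) * (a ^ (1 - α))⁻¹) := by
        rw [weightedTerm, hsplit]; ring
    _ = n ^ (1 - α) * e := by rw [he_pow, mul_inv_cancel₀ ha_ne, mul_one]

lemma weightedTerm_one_le (hα : 0 ≤ α) (ha : 0 ≤ a) (he₀ : 0 ≤ e) (he₁ : e ≤ 1) :
    weightedTerm α a e 1 ≤ a ^ (1 - α) := by
  rw [weightedTerm, one_rpow, mul_one]
  exact mul_le_of_le_one_right (rpow_nonneg ha _) (rpow_le_one he₀ he₁ hα)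

lemma weightedTerm_ceil_le (hα : 1 ≤ α) (ha : 0 < a) (hn : 0 < n) (he₀ : 0 < e) (he₁ : e ≤ 1) :
    weightedTerm α a e ⌈n * a⁻¹ * e⌉₊ ≤ n ^ (1 - α) * e + a ^ (1 - α) := by
  set x := n * a⁻¹ * e
  rcases le_or_gt 1 x with hx | hx
  · have hx₀ : 0 < x := by linarith
    have hceil : weightedTerm α a e ⌈x⌉₊ ≤ weightedTerm α a e x := by
      unfold weightedTerm
      exact mul_le_mul_of_nonneg_left
        (rpow_le_rpow_of_nonpos hx₀ (Nat.le_ceil x) (by linarith)) (by positivity)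
    rw [weightedTerm_mul_inv_mul_eq ha hn.le he₀] at hceil
    linarith [rpow_nonneg ha.le (1 - α)]
  · have hceil_one : ⌈x⌉₊ = 1 :=
      le_antisymm (Nat.ceil_le.mpr (by simpa using hx.le))
        (Nat.one_le_ceil_iff.mpr (by positivity))
    rw [hceil_one, Nat.cast_one]
    linarith [weightedTerm_one_le (by linarith : (0:ℝ) ≤ α) ha.le he₀.le he₁,
      mul_nonneg (rpow_nonneg hn.le (1 - α)) he₀.le]

lemma sum_weightedTerm_le {ι : Type*} (hα : 1 ≤ α) (hn : 0 < n) (s : Finset ι) (a eps : ι → ℝ)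
    (m : ι → ℕ) (ha : ∀ i, 0 < a i) (heps : ∀ i, 0 ≤ eps i) (hsum : ∑ i ∈ s, eps i ≤ 1)
    (hm : ∀ i, m i = if 0 < eps i then ⌈n * (a i)⁻¹ * eps i⌉₊ else 1) :
    ∑ i ∈ s, weightedTerm α (a i) (eps i) (m i) ≤ n ^ (1 - α) + ∑ i ∈ s, a i ^ (1 - α) := by
  have hterm : ∀ i ∈ s,
      weightedTerm α (a i) (eps i) (m i) ≤ n ^ (1 - α) * eps i + a i ^ (1 - α) := by
    intro i hi
    rcases (heps i).eq_or_lt with h0 | hpos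
    · rw [← h0, weightedTerm_zero_left (by linarith), mul_zero, zero_add]
      exact rpow_nonneg (ha i).le _
    · rw [hm i, if_pos hpos]
      exact weightedTerm_ceil_le hα (ha i) hn hpos
        ((single_le_sum (fun j _ => heps j) hi).trans hsum)
  calc ∑ i ∈ s, weightedTerm α (a i) (eps i) (m i)
      ≤ ∑ i ∈ s, (n ^ (1 - α) * eps i + a i ^ (1 - α)) := sum_le_sum hterm
    _ = n ^ (1 - α) * ∑ i ∈ s, eps i + ∑ i ∈ s, a i ^ (1 - α) := by
      rw [sum_add_distrib, mul_sum]
    _ ≤ n ^ (1 - α) + ∑ i ∈ s, a i ^ (1 - α) := by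
      gcongr
      exact mul_le_of_le_one_right (rpow_nonneg hn.le _) hsum

end WeightedTerm

lemma sum_Icc_pow_le_of_lt_one {r : ℝ} (hr₀ : 0 ≤ r) (hr₁ : r < 1) (t₁ t₂ : ℕ) :
    ∑ t ∈ Icc t₁ t₂, r ^ t ≤ (1 - r)⁻¹ * r ^ t₁ := by
  rw [← Ico_add_one_right_eq_Icc, inv_mul_eq_div]
  exact geom_sum_Ico_le_of_lt_one hr₀ hr₁

/-- The weighted sum estimate from the proof of the main lemma: with
`n_t = ⌈n 2^{-t} ε_t⌉` (and `n_t = 1` if `ε_t = 0`), one has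
`∑_t 2^{t(1-q/p)} ε_t^{q/p} n_t^{1-q/p} ≤ C(p,q)(n^{1-q/p} + 2^{t₁(1-q/p)})`. -/
theorem weighted_sum_estimate (p q : ℝ) (hp : 1 ≤ p) (hpq : p < q) :
    ∃ C : ℝ, 0 < C ∧ ∀ (t₁ t₂ : ℕ) (eps : ℕ → ℝ) (n : ℕ) (nt : ℕ → ℕ),
      (∀ t, 0 ≤ eps t) →
      (∑ t ∈ Finset.Icc t₁ t₂, eps t) ≤ 1 →
      1 ≤ n →
      (∀ t, nt t = if 0 < eps t then ⌈(n : ℝ) * (2:ℝ) ^ (-(t:ℝ)) * eps t⌉₊ else 1) →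
      ∑ t ∈ Finset.Icc t₁ t₂,
          (2:ℝ) ^ ((t:ℝ) * (1 - q / p)) * eps t ^ (q / p) * (nt t : ℝ) ^ (1 - q / p)
        ≤ C * ((n : ℝ) ^ (1 - q / p) + (2:ℝ) ^ ((t₁:ℝ) * (1 - q / p))) := by
  have hα : 1 < q / p := (one_lt_div (by linarith)).mpr hpq
  set r : ℝ := (2:ℝ) ^ (1 - q / p)
  have hr₀ : 0 < r := rpow_pos_of_pos two_pos _
  have hr₁ : r < 1 := rpow_lt_one_of_one_lt_of_neg one_lt_two (by linarith)
  have hC : 1 ≤ (1 - r)⁻¹ := one_le_inv₀ (by linarith) |>.mpr (by linarith)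
  refine ⟨(1 - r)⁻¹, by linarith, fun t₁ t₂ eps n nt heps hsum hn hnt => ?_⟩
  have hpow (t : ℕ) : (2:ℝ) ^ ((t:ℝ) * (1 - q / p)) = ((2:ℝ) ^ t) ^ (1 - q / p) :=
    rpow_natCast_mul zero_le_two t _
  have hpow_eq (t : ℕ) : ((2:ℝ) ^ t) ^ (1 - q / p) = r ^ t := by
    rw [← hpow, mul_comm, rpow_mul_natCast zero_le_two]
  have hnt' (t : ℕ) : nt t = if 0 < eps t then ⌈(n : ℝ) * ((2:ℝ) ^ t)⁻¹ * eps t⌉₊ else 1 := by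
    rw [hnt t, rpow_neg zero_le_two, rpow_natCast]
  have hn_pow : 0 ≤ (n : ℝ) ^ (1 - q / p) := rpow_nonneg n.cast_nonneg _
  simp only [hpow]
  calc _ ≤ (n : ℝ) ^ (1 - q / p) + ∑ t ∈ Icc t₁ t₂, ((2:ℝ) ^ t) ^ (1 - q / p) :=
        sum_weightedTerm_le hα.le (by exact_mod_cast hn) _ _ eps nt (fun t => by positivity)
          heps hsum hnt'
    _ ≤ (n : ℝ) ^ (1 - q / p) + (1 - r)⁻¹ * r ^ t₁ := by
        simp only [hpow_eq]
        gcongr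
        exact sum_Icc_pow_le_of_lt_one hr₀.le hr₁ t₁ t₂
    _ ≤ (1 - r)⁻¹ * ((n : ℝ) ^ (1 - q / p) + ((2:ℝ) ^ t₁) ^ (1 - q / p)) := by
        rw [hpow_eq]
        nlinarith
end

section
/- Let 1 ≤ p ≤ q ≤ ∞ and ν ∈ ℕ. For 1 ≤ k ≤ log₂ ν, the entropy numbers of the identity id : l_p^ν → l_q^ν satisfy c(p,q) ≤ e_k(id) ≤ C(p,q) for constants 0 < c(p,q) ≤ C(p,q) depending only on p, q. -/
open Set Metric

/-- The identity map `l_p^ν → l_q^ν` as a continuous linear map. -/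
noncomputable def lpId (p q : ENNReal) [Fact (1 ≤ p)] [Fact (1 ≤ q)] (ν : ℕ) :
    PiLp p (fun _ : Fin ν => ℝ) →L[ℝ] PiLp q (fun _ : Fin ν => ℝ) :=
  LinearMap.toContinuousLinearMap
    (((WithLp.linearEquiv q ℝ (Fin ν → ℝ)).symm.toLinearMap).comp
      ((WithLp.linearEquiv p ℝ (Fin ν → ℝ)).toLinearMap))

/-!
The upper bound holds because the identity `l_p^ν → l_q^ν` is a contraction for `p ≤ q`,
so a single ball of radius `1` already covers the image of the unit ball. For the lower bound,
when `2 ^ (k - 1) < ν` two of the `ν` unit vectors, which are pairwise at `l_q`-distance at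
least `1`, must share one of the `2 ^ (k - 1)` covering balls, whose radius is therefore at
least `1 / 2`.
-/

section EntropyNumber

variable {X Y : Type*} [NormedAddCommGroup X] [NormedSpace ℝ X]
  [NormedAddCommGroup Y] [NormedSpace ℝ Y] (T : X →L[ℝ] Y) (k : ℕ)

lemma entropyNumber_le_of_cover {ε : ℝ} (hε : 0 < ε) (y : Fin (2 ^ (k - 1)) → Y)
    (hy : T '' closedBall 0 1 ⊆ ⋃ i, closedBall (y i) ε) : entropyNumber T k ≤ ε :=
  csInf_le ⟨0, fun _ h => h.1.le⟩ ⟨hε, y, hy⟩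

lemma image_closedBall_subset_iUnion_closedBall_zero {ε : ℝ} (hε : ‖T‖ ≤ ε) :
    T '' closedBall 0 1 ⊆ ⋃ _ : Fin (2 ^ (k - 1)), closedBall (0 : Y) ε := by
  rintro _ ⟨x, hx, rfl⟩
  refine mem_iUnion.2 ⟨⟨0, by positivity⟩, mem_closedBall_zero_iff.2 ?_⟩
  calc ‖T x‖ ≤ ‖T‖ * 1 := T.le_opNorm_of_le (mem_closedBall_zero_iff.1 hx)
    _ ≤ ε := by rwa [mul_one]

lemma entropyNumber_le_opNorm : entropyNumber T k ≤ ‖T‖ :=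
  le_of_forall_pos_le_add fun _ hδ =>
    entropyNumber_le_of_cover T k (by positivity) _
      (image_closedBall_subset_iUnion_closedBall_zero T k (le_add_of_nonneg_right hδ.le))

lemma le_entropyNumber_of_forall_cover {δ : ℝ}
    (h : ∀ ε > 0, ∀ y : Fin (2 ^ (k - 1)) → Y,
      T '' closedBall 0 1 ⊆ ⋃ i, closedBall (y i) ε → δ ≤ ε) :
    δ ≤ entropyNumber T k :=
  le_csInf ⟨‖T‖ + 1, by positivity, _,
      image_closedBall_subset_iUnion_closedBall_zero T k (le_add_of_nonneg_right zero_le_one)⟩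
    fun _ ⟨hε, y, hy⟩ => h _ hε y hy

lemma half_le_entropyNumber_of_pairwise_le_dist {ι : Type*} [Fintype ι] {δ : ℝ} (s : ι → X)
    (hs : ∀ i, ‖s i‖ ≤ 1) (hsep : Pairwise fun i j => δ ≤ dist (T (s i)) (T (s j)))
    (hcard : 2 ^ (k - 1) < Fintype.card ι) : δ / 2 ≤ entropyNumber T k := by
  refine le_entropyNumber_of_forall_cover T k fun ε _ y hy => ?_
  choose f hf using fun i => mem_iUnion.1 (hy ⟨s i, mem_closedBall_zero_iff.2 (hs i), rfl⟩)
  obtain ⟨i, j, hij, hfij⟩ := Fintype.exists_ne_map_eq_of_card_lt f (by simpa using hcard)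
  have hi := mem_closedBall.1 (hf i)
  have hj := mem_closedBall.1 (hf j)
  rw [hfij] at hi
  linarith [hsep hij, dist_triangle_right (T (s i)) (T (s j)) (y (f j))]

end EntropyNumber

namespace PiLp

variable {ι : Type*} [Fintype ι] {β : ι → Type*} [∀ i, SeminormedAddCommGroup (β i)]
  {p q : ENNReal} [Fact (1 ≤ p)] [Fact (1 ≤ q)]

omit [Fact (1 ≤ p)] [Fact (1 ≤ q)] in
lemma norm_rpow_eq_sum (hp : 0 < p.toReal) (x : PiLp p β) :
    ‖x‖ ^ p.toReal = ∑ i, ‖x i‖ ^ p.toReal := by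
  rw [norm_eq_sum hp, one_div, Real.rpow_inv_rpow (by positivity) hp.ne']

lemma norm_toLp_ofLp_le_of_le (hpq : p ≤ q) (x : PiLp p β) :
    ‖WithLp.toLp q (WithLp.ofLp x)‖ ≤ ‖x‖ := by
  rcases q.dichotomy with rfl | hq
  · rw [norm_toLp, pi_norm_le_iff_of_nonneg (norm_nonneg x)]
    exact norm_apply_le x
  have hq₀ : 0 < q.toReal := zero_lt_one.trans_le hq
  have hq_top : q ≠ ⊤ := (ENNReal.toReal_pos_iff.1 hq₀).2.ne
  have hp : 1 ≤ p.toReal := p.dichotomy.resolve_left (ne_top_of_le_ne_top hq_top hpq)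
  have hpq' : p.toReal ≤ q.toReal := ENNReal.toReal_mono hq_top hpq
  have hsum : ∑ i, ‖x i‖ ^ q.toReal ≤ ‖x‖ ^ q.toReal :=
    calc ∑ i, ‖x i‖ ^ q.toReal
        = ∑ i, ‖x i‖ ^ p.toReal * ‖x i‖ ^ (q.toReal - p.toReal) := by
          refine Finset.sum_congr rfl fun i _ => ?_
          rw [← Real.rpow_add' (norm_nonneg _) (by linarith), add_sub_cancel]
      _ ≤ ∑ i, ‖x i‖ ^ p.toReal * ‖x‖ ^ (q.toReal - p.toReal) := by
          gcongr with i
          exact norm_apply_le x i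
      _ = ‖x‖ ^ q.toReal := by
          rw [← Finset.sum_mul, ← norm_rpow_eq_sum (by linarith),
            ← Real.rpow_add' (norm_nonneg _) (by linarith), add_sub_cancel]
  calc ‖WithLp.toLp q (WithLp.ofLp x)‖ = (∑ i, ‖x i‖ ^ q.toReal) ^ (1 / q.toReal) :=
        norm_eq_sum hq₀ _
    _ ≤ (‖x‖ ^ q.toReal) ^ (1 / q.toReal) := by gcongr
    _ = ‖x‖ := by rw [one_div, Real.rpow_rpow_inv (norm_nonneg x) hq₀.ne']

lemma norm_le_dist_single_of_ne [DecidableEq ι] {i j : ι} (hij : i ≠ j) (b : β i) (c : β j) :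
    ‖b‖ ≤ dist (single q i b) (single q j c) := by
  simpa [dist_eq_norm, Pi.single_eq_of_ne hij] using norm_apply_le (single q i b - single q j c) i

end PiLp

lemma lpId_opNorm_le_one {p q : ENNReal} [Fact (1 ≤ p)] [Fact (1 ≤ q)] (hpq : p ≤ q)
    (ν : ℕ) : ‖lpId p q ν‖ ≤ 1 :=
  ContinuousLinearMap.opNorm_le_bound _ zero_le_one fun x => by
    rw [one_mul]
    exact PiLp.norm_toLp_ofLp_le_of_le hpq x

lemma two_pow_pred_lt_of_le_logb {k ν : ℕ} (hk : 1 ≤ k) (h : (k : ℝ) ≤ Real.logb 2 ν) :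
    2 ^ (k - 1) < ν := by
  rcases Nat.eq_zero_or_pos ν with rfl | hν
  · norm_num at h
    omega
  have hpow : ((2 ^ k : ℕ) : ℝ) ≤ ν := by
    rw [Real.le_logb_iff_rpow_le one_lt_two (by exact_mod_cast hν), Real.rpow_natCast] at h
    exact_mod_cast h
  calc 2 ^ (k - 1) < 2 ^ k := Nat.pow_lt_pow_right one_lt_two (by omega)
    _ ≤ ν := by exact_mod_cast hpow

/-- Small-`k` regime of Schütt's theorem: for `1 ≤ k ≤ log₂ ν`,
`c(p,q) ≤ e_k(id : l_p^ν → l_q^ν) ≤ C(p,q)`. -/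
theorem schuett_small_k (p q : ENNReal) [Fact (1 ≤ p)] [Fact (1 ≤ q)] (hpq : p ≤ q) :
    ∃ c C : ℝ, 0 < c ∧ c ≤ C ∧ ∀ (ν : ℕ), 1 ≤ ν → ∀ k : ℕ, 1 ≤ k →
      (k : ℝ) ≤ Real.logb 2 ν →
      c ≤ entropyNumber (lpId p q ν) k ∧ entropyNumber (lpId p q ν) k ≤ C := by
  refine ⟨1 / 2, 1, by norm_num, by norm_num, fun ν _ k hk hklog => ⟨?_, ?_⟩⟩
  · exact half_le_entropyNumber_of_pairwise_le_dist (lpId p q ν) k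
      (fun i => PiLp.single p i 1) (fun i => by simp)
      (fun i j hij => norm_one.symm.trans_le (PiLp.norm_le_dist_single_of_ne (q := q) hij 1 1))
      (by simpa using two_pow_pred_lt_of_le_logb hk hklog)
  · exact (entropyNumber_le_opNorm _ k).trans (lpId_opNorm_le_one hpq ν)
end

section
/- Let (T, ξ*) be a finite rooted tree with card V₁(ξ) ≤ k for every vertex ξ, and let Φ : 2^{V(T)} → ℝ₊ be superadditive on disjoint sets (Φ(V₁ ∪ V₂) ≥ Φ(V₁) + Φ(V₂) for disjoint V₁, V₂) with Φ(V(T)) > 0. Then there is C(k) > 0 such that for every n ∈ ℕ there exists a partition of T into at most C(k)·n subtrees T_j such that Φ(V(T_j)) ≤ (k+2)·Φ(V(T))/n for every j with card V(T_j) ≥ 2. -/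
/-!
Put `t = Φ(V)/n` and run a greedy algorithm from the leaves to the root. A vertex `v` merges
itself with the still-open components of its children; if the merged set has `Φ ≤ t` it stays
open, otherwise `{v}` and the (at most `k`) open components of the children are closed as parts.
A closing step creates at most `k + 1` parts and uses up a set of mass `> t` that is disjoint from
everything closed before, so by superadditivity there are at most `n` closing steps. Together with
the last open component this gives at most `(k + 1) n + 1 ≤ (k + 2) n` parts, and every part that
is not a singleton has mass at most `t`.
-/

section Superadditive

variable {V ι : Type*} {Φ : Set V → ℝ}

lemma monotone_of_superadditive (hΦ : ∀ A B : Set V, Disjoint A B → Φ A + Φ B ≤ Φ (A ∪ B))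
    (hΦ₀ : ∀ A, 0 ≤ Φ A) : Monotone Φ := fun A B h => by
  have := hΦ A (B \ A) disjoint_sdiff_self_right
  rw [Set.union_sdiff_cancel h] at this
  linarith [hΦ₀ (B \ A)]

lemma sum_le_apply_biUnion_of_superadditive
    (hΦ : ∀ A B : Set V, Disjoint A B → Φ A + Φ B ≤ Φ (A ∪ B)) (hΦ₀ : 0 ≤ Φ ∅)
    {s : Finset ι} {f : ι → Set V} (hf : (s : Set ι).PairwiseDisjoint f) :
    ∑ i ∈ s, Φ (f i) ≤ Φ (⋃ i ∈ s, f i) := by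
  classical
  induction s using Finset.induction_on with
  | empty => simpa using hΦ₀
  | @insert i s hi ih =>
    rw [Finset.coe_insert] at hf
    rw [Finset.sum_insert hi, Finset.set_biUnion_insert]
    have hdisj : Disjoint (f i) (⋃ j ∈ s, f j) := Set.disjoint_iUnion₂_right.2 fun j hj =>
      hf (Set.mem_insert _ _) (Set.mem_insert_of_mem _ hj) fun h => hi (h ▸ hj)
    linarith [ih (hf.subset (Set.subset_insert _ _)), hΦ _ _ hdisj]

end Superadditive

lemma Set.insert_biUnion_diff_insert_biUnion {α ι : Type*} {s : Set ι} {D O : ι → Set α} {v : α}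
    (hD : s.PairwiseDisjoint D) (hOD : ∀ i ∈ s, O i ⊆ D i) (hv : ∀ i ∈ s, v ∉ D i) :
    insert v (⋃ i ∈ s, D i) \ insert v (⋃ i ∈ s, O i) = ⋃ i ∈ s, D i \ O i := by
  ext w
  simp only [Set.mem_sdiff, Set.mem_insert_iff, Set.mem_iUnion₂, exists_prop, not_or, not_exists,
    not_and]
  constructor
  · rintro ⟨rfl | ⟨i, hi, hwi⟩, hwv, hwO⟩
    · exact absurd rfl hwv
    · exact ⟨i, hi, hwi, hwO i hi⟩
  · rintro ⟨i, hi, hwi, hwO⟩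
    refine ⟨.inr ⟨i, hi, hwi⟩, fun h => hv i hi (h ▸ hwi), fun j hj hwj => ?_⟩
    obtain rfl | hij := eq_or_ne i j
    · exact hwO hwj
    · exact Set.disjoint_left.1 (hD hi hj hij) hwi (hOD j hj hwj)

lemma SimpleGraph.connected_induce_singleton {V : Type*} (G : SimpleGraph V) (v : V) :
    (G.induce {v}).Connected :=
  .of_subsingleton

lemma SimpleGraph.connected_induce_insert_biUnion {V ι : Type*} {G : SimpleGraph V} {v : V}
    {s : Set ι} {O : ι → Set V}
    (hO : ∀ i ∈ s, (O i).Nonempty → (G.induce (O i)).Connected ∧ ∃ a ∈ O i, G.Adj v a) :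
    (G.induce (insert v (⋃ i ∈ s, O i))).Connected := by
  refine G.induce_connected_of_patches v (Set.mem_insert _ _) ?_
  rintro w (rfl | hw)
  · exact ⟨{w}, by simp, rfl, rfl, .rfl⟩
  · obtain ⟨i, hi, hwi⟩ := Set.mem_iUnion₂.1 hw
    obtain ⟨hconn, a, ha, hva⟩ := hO i hi ⟨w, hwi⟩
    have hpatch : (G.induce (insert v (O i))).Connected :=
      G.connected_induce_union (G.connected_induce_singleton v).preconnected hconn.preconnected
        rfl ha hva
    exact ⟨insert v (O i), Set.insert_subset_insert (Set.subset_biUnion_of_mem hi),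
      Set.mem_insert _ _, Set.mem_insert_of_mem _ hwi, hpatch.preconnected _ _⟩

namespace SimpleGraph

variable {V : Type*} (G : SimpleGraph V) (r : V)

def IsChild (v c : V) : Prop := G.Adj v c ∧ G.dist r c = G.dist r v + 1

def descendants (v : V) : Set V := {w | Relation.ReflTransGen (G.IsChild r) v w}

variable {G r}

lemma eq_or_dist_lt_of_mem_descendants {v w : V} (h : w ∈ G.descendants r v) :
    w = v ∨ G.dist r v < G.dist r w := by
  induction h with
  | refl => exact .inl rfl
  | tail _ hxw ih =>
    have := hxw.2
    exact .inr (by rcases ih with rfl | ih <;> omega)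

lemma dist_le_of_mem_descendants {v w : V} (h : w ∈ G.descendants r v) :
    G.dist r v ≤ G.dist r w := by
  rcases eq_or_dist_lt_of_mem_descendants h with rfl | h <;> omega

lemma not_mem_descendants_of_isChild {v c : V} (h : G.IsChild r v c) :
    v ∉ G.descendants r c := fun hv => by
  have := dist_le_of_mem_descendants hv
  have := h.2
  omega

lemma descendants_ssubset_of_isChild {v c : V} (h : G.IsChild r v c) :
    G.descendants r c ⊂ G.descendants r v :=
  Set.ssubset_iff_subset_ne.2 ⟨fun _ hw => Relation.ReflTransGen.head h hw,
    fun he => not_mem_descendants_of_isChild h (he ▸ Relation.ReflTransGen.refl)⟩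

variable (G r) in
lemma wellFounded_isChild [Finite V] : WellFounded (flip (G.IsChild r)) :=
  Subrelation.wf descendants_ssubset_of_isChild (InvImage.wf (G.descendants r) wellFounded_lt)

lemma descendants_eq_insert_iUnion (v : V) :
    G.descendants r v = insert v (⋃ (c) (_ : G.IsChild r v c), G.descendants r c) := by
  ext w
  simp only [Set.mem_insert_iff, Set.mem_iUnion, exists_prop]
  exact Relation.ReflTransGen.cases_head_iff.trans (or_congr eq_comm Iff.rfl)

lemma Connected.exists_isChild (hG : G.Connected) {w : V} (hw : w ≠ r) :
    ∃ u, G.IsChild r u w := by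
  obtain ⟨p, -, hp⟩ := hG.exists_path_of_dist w r
  cases p with
  | nil => exact absurd rfl hw
  | @cons _ u _ hwu q =>
    refine ⟨u, hwu.symm, ?_⟩
    have h₁ : G.dist r u ≤ q.length := dist_comm ▸ dist_le q
    have h₂ := (hG.preconnected r u).dist_triangle_left w
    rw [dist_eq_one_iff_adj.2 hwu.symm] at h₂
    have h₃ : G.dist r w = q.length + 1 := by rw [dist_comm, ← hp, Walk.length_cons]
    omega

lemma Connected.descendants_root (hG : G.Connected) : G.descendants r r = Set.univ := by
  refine Set.eq_univ_of_forall fun w => ?_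
  induction hd : G.dist r w generalizing w with
  | zero => exact (Reachable.dist_eq_zero_iff (hG.preconnected r w)).1 hd ▸ .refl
  | succ n ih =>
    have hw : w ≠ r := by rintro rfl; simp at hd
    obtain ⟨u, hu⟩ := hG.exists_isChild hw
    exact .tail (ih u (by have := hu.2; omega)) hu

lemma IsTree.eq_of_isChild (hT : G.IsTree) {u u' w : V} (h : G.IsChild r u w)
    (h' : G.IsChild r u' w) : u = u' := by
  obtain ⟨p, -, hp⟩ := hT.connected.exists_path_of_dist r u
  obtain ⟨p', -, hp'⟩ := hT.connected.exists_path_of_dist r u'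
  have hpath : ∀ {x} (q : G.Walk r x) (hx : G.IsChild r x w), q.length = G.dist r x →
      (q.concat hx.1).IsPath := fun q hx hq =>
    (q.concat hx.1).isPath_of_length_eq_dist (by rw [Walk.length_concat, hq, hx.2])
  have := (hT.isAcyclic.subsingleton_path r w).elim ⟨_, hpath p h hp⟩ ⟨_, hpath p' h' hp'⟩
  exact (Walk.concat_inj (congrArg Subtype.val this)).1

lemma IsTree.disjoint_descendants (hT : G.IsTree) {a b : V} (hab : a ≠ b)
    (hd : G.dist r a = G.dist r b) : Disjoint (G.descendants r a) (G.descendants r b) := by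
  rw [Set.disjoint_left]
  intro w hwa hwb
  induction hwa generalizing b with
  | refl =>
    rcases eq_or_dist_lt_of_mem_descendants hwb with rfl | h
    · exact hab rfl
    · omega
  | @tail x w hax hxw ih =>
    rcases (Relation.ReflTransGen.cases_tail_iff _ _ _).1 hwb with rfl | ⟨y, hby, hyw⟩
    · have := dist_le_of_mem_descendants hax
      have := hxw.2
      omega
    · exact ih hab hd (hT.eq_of_isChild hxw hyw ▸ hby)

end SimpleGraph

section AdmissiblePartition

variable {V : Type*} (G : SimpleGraph V) (Φ : Set V → ℝ) (t : ℝ)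

def IsAdmissiblePart (S : Set V) : Prop :=
  S.Nonempty ∧ (G.induce S).Connected ∧ (2 ≤ S.ncard → Φ S ≤ t)

structure IsAdmissiblePartition (P : Finset (Set V)) (D : Set V) : Prop where
  admissible : ∀ S ∈ P, IsAdmissiblePart G Φ t S
  pairwiseDisjoint : (P : Set (Set V)).PairwiseDisjoint id
  sUnion_eq : ⋃₀ (P : Set (Set V)) = D

variable {G Φ t}

lemma isAdmissiblePart_singleton (v : V) : IsAdmissiblePart G Φ t {v} :=
  ⟨Set.singleton_nonempty v, G.connected_induce_singleton v, by simp⟩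

lemma IsAdmissiblePartition.insert [DecidableEq (Set V)] {P : Finset (Set V)} {D S : Set V}
    (hP : IsAdmissiblePartition G Φ t P D) (hS : IsAdmissiblePart G Φ t S) (hSD : Disjoint S D) :
    IsAdmissiblePartition G Φ t (insert S P) (S ∪ D) where
  admissible := Finset.forall_mem_insert _ _ _ |>.2 ⟨hS, hP.admissible⟩
  pairwiseDisjoint := by
    rw [Finset.coe_insert]
    refine hP.pairwiseDisjoint.insert fun T hT _ => hSD.mono_right ?_
    exact hP.sUnion_eq ▸ Set.subset_sUnion_of_mem hT
  sUnion_eq := by rw [Finset.coe_insert, Set.sUnion_insert, hP.sUnion_eq]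

lemma isAdmissiblePartition_biUnion {ι : Type*} [DecidableEq (Set V)] {s : Finset ι}
    {D : ι → Set V} {P : ι → Finset (Set V)} (hD : (s : Set ι).PairwiseDisjoint D)
    (hP : ∀ i ∈ s, IsAdmissiblePartition G Φ t (P i) (D i)) :
    IsAdmissiblePartition G Φ t (s.biUnion P) (⋃ i ∈ s, D i) where
  admissible S hS := by
    obtain ⟨i, hi, hS⟩ := Finset.mem_biUnion.1 hS
    exact (hP i hi).admissible S hS
  pairwiseDisjoint := by
    rw [Finset.coe_biUnion]
    refine Set.PairwiseDisjoint.biUnion (fun i hi j hj hij => ?_)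
      fun i hi => (hP i hi).pairwiseDisjoint
    have hU : ∀ i ∈ s, ⨆ S ∈ (P i : Set (Set V)), id S = D i := fun i hi => by
      rw [← (hP i hi).sUnion_eq, Set.sUnion_eq_biUnion]; rfl
    simpa only [Function.onFun, hU i hi, hU j hj] using hD hi hj hij
  sUnion_eq := by
    simp only [Finset.coe_biUnion, Set.sUnion_iUnion]
    exact Set.iUnion₂_congr fun i hi => (hP i hi).sUnion_eq

end AdmissiblePartition

section Greedy

variable {V : Type*} {G : SimpleGraph V} {Φ : Set V → ℝ} {t : ℝ} {k : ℕ}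

variable (G Φ t k) in
/-- The state of the greedy algorithm on the subtree `D` below `v`: `P` holds the closed parts,
`O` is the open component of `v` (empty once it has been closed), and every `k + 1` closed parts
are paid for by mass `t` of the closed region `D \ O`. -/
structure IsGreedyState (D : Set V) (v : V) (P : Finset (Set V)) (O : Set V) : Prop where
  partition : IsAdmissiblePartition G Φ t P (D \ O)
  pending_subset : O ⊆ D
  pending : O = ∅ ∨ v ∈ O ∧ (G.induce O).Connected ∧ Φ O ≤ t
  mul_card_le : t * P.card ≤ (k + 1) * Φ (D \ O)

lemma IsGreedyState.exists_isAdmissiblePartition {D O : Set V} {v : V} {P : Finset (Set V)}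
    (h : IsGreedyState G Φ t k D v P O) :
    ∃ Q, IsAdmissiblePartition G Φ t Q D ∧ Q.card ≤ P.card + 1 := by
  classical
  rcases h.pending with rfl | ⟨hv, hconn, hΦO⟩
  · exact ⟨P, by simpa using h.partition, by omega⟩
  · refine ⟨insert O P, ?_, Finset.card_insert_le _ _⟩
    have := h.partition.insert ⟨⟨v, hv⟩, hconn, fun _ => hΦO⟩ Set.disjoint_sdiff_right
    rwa [Set.union_sdiff_cancel h.pending_subset] at this

variable {v : V} {C : Finset V} {D O : V → Set V} {P : V → Finset (Set V)}

lemma isGreedyState_extend (hΦ : ∀ A B : Set V, Disjoint A B → Φ A + Φ B ≤ Φ (A ∪ B))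
    (hΦ₀ : 0 ≤ Φ ∅) (ht : 0 ≤ t) (hadj : ∀ c ∈ C, G.Adj v c) (hD : (C : Set V).PairwiseDisjoint D)
    (hvD : ∀ c ∈ C, v ∉ D c) (hS : ∀ c ∈ C, IsGreedyState G Φ t k (D c) c (P c) (O c))
    (hle : Φ (insert v (⋃ c ∈ C, O c)) ≤ t) :
    IsGreedyState G Φ t k (insert v (⋃ c ∈ C, D c)) v (C.biUnion P) (insert v (⋃ c ∈ C, O c)) := by
  classical
  have hdiff := Set.insert_biUnion_diff_insert_biUnion hD (fun c hc => (hS c hc).pending_subset) hvD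
  simp only [Finset.set_biUnion_coe] at hdiff
  refine ⟨hdiff ▸ isAdmissiblePartition_biUnion ?_ fun c hc => (hS c hc).partition,
    Set.insert_subset_insert (Set.biUnion_mono subset_rfl fun c hc => (hS c hc).pending_subset),
    .inr ⟨Set.mem_insert _ _, SimpleGraph.connected_induce_insert_biUnion fun c hc hne => ?_, hle⟩,
    ?_⟩
  · exact hD.mono_on fun c hc => Set.sdiff_subset
  · rcases (hS c hc).pending with h | ⟨hc', hconn, -⟩
    · exact absurd h hne.ne_empty
    · exact ⟨hconn, c, hc', hadj c hc⟩
  · rw [hdiff]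
    calc t * (C.biUnion P).card ≤ ∑ c ∈ C, t * (P c).card := by
          rw [← Finset.mul_sum]
          exact mul_le_mul_of_nonneg_left (mod_cast Finset.card_biUnion_le) ht
      _ ≤ ∑ c ∈ C, (k + 1) * Φ (D c \ O c) := Finset.sum_le_sum fun c hc => (hS c hc).mul_card_le
      _ ≤ (k + 1) * Φ (⋃ c ∈ C, D c \ O c) := by
          rw [← Finset.mul_sum]
          exact mul_le_mul_of_nonneg_left
            (sum_le_apply_biUnion_of_superadditive hΦ hΦ₀ (hD.mono_on fun _ _ => Set.sdiff_subset))
            (by positivity)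

lemma isGreedyState_close (hΦ : ∀ A B : Set V, Disjoint A B → Φ A + Φ B ≤ Φ (A ∪ B))
    (hΦ₀ : 0 ≤ Φ ∅) (ht : 0 ≤ t) (hC : C.card ≤ k) (hD : (C : Set V).PairwiseDisjoint D)
    (hvD : ∀ c ∈ C, v ∉ D c) (hS : ∀ c ∈ C, IsGreedyState G Φ t k (D c) c (P c) (O c))
    (hlt : t < Φ (insert v (⋃ c ∈ C, O c))) :
    ∃ P', IsGreedyState G Φ t k (insert v (⋃ c ∈ C, D c)) v P' ∅ := by
  classical
  choose! Q hQ hQcard using fun c hc => (hS c hc).exists_isAdmissiblePartition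
  have hdiff := Set.insert_biUnion_diff_insert_biUnion hD (fun c hc => (hS c hc).pending_subset) hvD
  simp only [Finset.set_biUnion_coe] at hdiff
  refine ⟨insert {v} (C.biUnion Q), ?_, Set.empty_subset _, .inl rfl, ?_⟩
  · rw [Set.sdiff_empty, Set.insert_eq]
    exact (isAdmissiblePartition_biUnion hD hQ).insert (isAdmissiblePart_singleton v)
      (Set.disjoint_singleton_left.2 (by simpa using hvD))
  rw [Set.sdiff_empty]
  have hsplit : Φ (insert v (⋃ c ∈ C, O c)) + Φ (⋃ c ∈ C, D c \ O c) ≤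
      Φ (insert v (⋃ c ∈ C, D c)) := by
    have hsub : insert v (⋃ c ∈ C, O c) ⊆ insert v (⋃ c ∈ C, D c) :=
      Set.insert_subset_insert (Set.biUnion_mono subset_rfl fun c hc => (hS c hc).pending_subset)
    rw [← hdiff]
    conv_rhs => rw [← Set.union_sdiff_cancel hsub]
    exact hΦ _ _ Set.disjoint_sdiff_right
  have hsum := sum_le_apply_biUnion_of_superadditive hΦ hΦ₀
    (hD.mono_on fun c _ => Set.sdiff_subset (t := O c))
  have hcard : (insert {v} (C.biUnion Q)).card ≤ k + 1 + ∑ c ∈ C, (P c).card :=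
    calc (insert {v} (C.biUnion Q)).card ≤ ∑ c ∈ C, (Q c).card + 1 :=
          (Finset.card_insert_le _ _).trans (by gcongr; exact Finset.card_biUnion_le)
      _ ≤ ∑ c ∈ C, ((P c).card + 1) + 1 := by gcongr with c hc; exact hQcard c hc
      _ ≤ k + 1 + ∑ c ∈ C, (P c).card := by
          rw [Finset.sum_add_distrib, Finset.sum_const, smul_eq_mul, mul_one]; omega
  calc t * (insert {v} (C.biUnion Q)).card
      ≤ t * (k + 1) + ∑ c ∈ C, t * (P c).card := by
        rw [← Finset.mul_sum, ← mul_add]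
        exact mul_le_mul_of_nonneg_left (mod_cast hcard) ht
    _ ≤ (k + 1) * Φ (insert v (⋃ c ∈ C, O c)) + ∑ c ∈ C, (k + 1) * Φ (D c \ O c) := by
        rw [mul_comm t]
        exact add_le_add (by gcongr) (Finset.sum_le_sum fun c hc => (hS c hc).mul_card_le)
    _ ≤ (k + 1) * Φ (insert v (⋃ c ∈ C, D c)) := by
        rw [← Finset.mul_sum, ← mul_add]
        gcongr
        linarith

end Greedy

section RootedTree

variable {V : Type*} {G : SimpleGraph V} {r : V} {Φ : Set V → ℝ} {t : ℝ} {k : ℕ}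

open SimpleGraph

lemma SimpleGraph.IsTree.exists_isGreedyState [Finite V] (hT : G.IsTree)
    (hk : ∀ v, {c | G.IsChild r v c}.ncard ≤ k)
    (hΦ : ∀ A B : Set V, Disjoint A B → Φ A + Φ B ≤ Φ (A ∪ B)) (hΦ₀ : 0 ≤ Φ ∅) (ht : 0 ≤ t)
    (v : V) : ∃ P O, IsGreedyState G Φ t k (G.descendants r v) v P O := by
  classical
  have := Fintype.ofFinite V
  induction v using (G.wellFounded_isChild r).induction with | _ v ih
  set C := Finset.univ.filter (G.IsChild r v)
  have hmem : ∀ c, c ∈ C ↔ G.IsChild r v c := by simp [C]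
  choose! P O hPO using fun c (hc : c ∈ C) => ih c ((hmem c).1 hc)
  have hD : (C : Set V).PairwiseDisjoint (G.descendants r) := fun a ha b hb hab =>
    hT.disjoint_descendants hab (by rw [((hmem a).1 ha).2, ((hmem b).1 hb).2])
  have hvD : ∀ c ∈ C, v ∉ G.descendants r c := fun c hc =>
    not_mem_descendants_of_isChild ((hmem c).1 hc)
  have hC : C.card ≤ k := by
    have hC : {c | G.IsChild r v c} = (C : Set V) := by ext; simp [C]
    simpa only [hC, Set.ncard_coe_finset] using hk v
  have hdesc : G.descendants r v = insert v (⋃ c ∈ C, G.descendants r c) := by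
    rw [descendants_eq_insert_iUnion]
    simp only [hmem]
  rw [hdesc]
  by_cases hle : Φ (insert v (⋃ c ∈ C, O c)) ≤ t
  · exact ⟨_, _, isGreedyState_extend hΦ hΦ₀ ht (fun c hc => ((hmem c).1 hc).1) hD hvD hPO hle⟩
  · obtain ⟨P', hP'⟩ := isGreedyState_close hΦ hΦ₀ ht hC hD hvD hPO (not_le.1 hle)
    exact ⟨P', ∅, hP'⟩

lemma SimpleGraph.IsTree.exists_isAdmissiblePartition_univ [Finite V] (hT : G.IsTree)
    (hk : ∀ v, {c | G.IsChild r v c}.ncard ≤ k)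
    (hΦ : ∀ A B : Set V, Disjoint A B → Φ A + Φ B ≤ Φ (A ∪ B)) (hΦ₀ : ∀ A, 0 ≤ Φ A) (ht : 0 ≤ t) :
    ∃ Q, IsAdmissiblePartition G Φ t Q Set.univ ∧ t * Q.card ≤ (k + 1) * Φ Set.univ + t := by
  obtain ⟨P, O, hPO⟩ := hT.exists_isGreedyState hk hΦ (hΦ₀ ∅) ht r
  rw [hT.connected.descendants_root] at hPO
  obtain ⟨Q, hQ, hcard⟩ := hPO.exists_isAdmissiblePartition
  refine ⟨Q, hQ, ?_⟩
  calc t * Q.card ≤ t * P.card + t := by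
        rw [← mul_add_one]; exact mul_le_mul_of_nonneg_left (mod_cast hcard) ht
    _ ≤ (k + 1) * Φ (Set.univ \ O) + t := add_le_add_left hPO.mul_card_le t
    _ ≤ (k + 1) * Φ Set.univ + t := by
        gcongr; exact monotone_of_superadditive hΦ hΦ₀ (Set.subset_univ _)

end RootedTree

/-- Partition lemma for trees: if every vertex of a finite rooted tree has at most `k`
children and `Φ` is superadditive on disjoint vertex sets with `Φ(V) > 0`, then there is
`C(k) > 0` such that for every `n` the tree can be partitioned into at most `C(k)·n`
subtrees `T_j` with `Φ(V(T_j)) ≤ (k+2)Φ(V)/n` whenever `T_j` has at least two vertices. -/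
theorem tree_partition_lemma (k : ℕ) :
    ∃ C : ℝ, 0 < C ∧
      ∀ (V : Type) (_ : Fintype V) (G : SimpleGraph V) (root : V),
        G.IsTree →
        (∀ ξ : V, Set.ncard {c : V | G.Adj ξ c ∧ G.dist root c = G.dist root ξ + 1} ≤ k) →
        ∀ Φ : Set V → ℝ,
          (∀ A : Set V, 0 ≤ Φ A) →
          (∀ A B : Set V, Disjoint A B → Φ A + Φ B ≤ Φ (A ∪ B)) →
          0 < Φ Set.univ →
          ∀ n : ℕ, 1 ≤ n →
            ∃ P : Finset (Set V),
              (∀ S ∈ P, S.Nonempty ∧ (G.induce S).Connected) ∧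
              (∀ S ∈ P, ∀ S' ∈ P, S ≠ S' → Disjoint S S') ∧
              (∀ v : V, ∃ S ∈ P, v ∈ S) ∧
              (P.card : ℝ) ≤ C * n ∧
              (∀ S ∈ P, 2 ≤ S.ncard → Φ S ≤ (k + 2) * Φ Set.univ / n) := by
  refine ⟨k + 2, by positivity, fun V _ G root hT hk Φ hΦ₀ hΦ hpos n hn => ?_⟩
  have hn' : (1 : ℝ) ≤ n := mod_cast hn
  set t := Φ Set.univ / n
  have ht : 0 < t := by positivity
  have hΦt : Φ Set.univ = n * t := by simp only [t]; field_simp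
  obtain ⟨Q, hQ, hcard⟩ := hT.exists_isAdmissiblePartition_univ (r := root) hk hΦ hΦ₀ ht.le
  refine ⟨Q, fun S hS => (hQ.admissible S hS).imp_right And.left,
    fun S hS S' hS' => hQ.pairwiseDisjoint hS hS', fun v => ?_, ?_, fun S hS h2 => ?_⟩
  · have hv : v ∈ ⋃₀ (Q : Set (Set V)) := hQ.sUnion_eq ▸ Set.mem_univ v
    simpa using hv
  · refine le_of_mul_le_mul_left (hcard.trans ?_) ht
    rw [hΦt]
    nlinarith
  · calc Φ S ≤ t := (hQ.admissible S hS).2.2 h2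
      _ ≤ (k + 2) * Φ Set.univ / n := by
        rw [mul_div_assoc]; exact le_mul_of_one_le_left ht.le (by linarith [k.cast_nonneg (α := ℝ)])
end

section
/- Let 1 < p < q < ∞ and let a tree A be given with functions u, w : V(A) → (0, ∞). Suppose for each vertex ξ* there is a linear projection P_{ξ*} : Y_q → P with ‖f − P_{ξ*} f‖_{Y_q(F(ξ))} ≤ c₂ w(ξ) ∑_{ξ* ≤ ξ' ≤ ξ} u(ξ') ‖f‖_{X_p(F(ξ'))} for all ξ ≥ ξ*. Then for any subtree D with minimal vertex ξ*, ‖f − P_{ξ*} f‖_{Y_q(Ω_D)} ≤ c₂ · 𝔖^{p,q}_{D,u,w} · ‖f‖_{X_p(Ω_D)}, where 𝔖^{p,q}_{D,u,w} is the norm of the weighted summation operator on D from l_p to l_q. -/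
open ENNReal

/-- The norm of the two-weighted summation operator `S_{u,w}` on a partially ordered
vertex set (e.g. a subtree `D` with minimal vertex), from `l_p` to `l_q`: the least
constant `C` with `(∑_ξ (w(ξ) ∑_{ξ'≤ξ} u(ξ') f(ξ'))^q)^{1/q} ≤ C (∑_ξ f(ξ)^p)^{1/p}`. -/
noncomputable def summationNorm {V : Type*} [PartialOrder V]
    (p q : ℝ) (u w : V → ℝ≥0∞) : ℝ≥0∞ :=
  sInf {C : ℝ≥0∞ | ∀ f : V → ℝ≥0∞,
    (∑' ξ : V, (w ξ * ∑' ξ' : {ξ' : V // ξ' ≤ ξ}, u ξ'.1 * f ξ'.1) ^ q) ^ (1 / q)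
      ≤ C * (∑' ξ : V, f ξ ^ p) ^ (1 / p)}

/-! The local estimate says `b ≤ c₂ · S_{u,w} a` pointwise, so taking `ℓ_q` norms
gives `‖b‖_q ≤ c₂ ‖S_{u,w} a‖_q ≤ c₂ 𝔖 ‖a‖_p`. The only subtlety is that `𝔖` is an infimum in
`ℝ≥0∞`, so one has to check that it is attained; when `‖a‖_p = ∞` this needs `𝔖 = 0` to force
`S_{u,w} = 0`, which follows by testing `𝔖` on unit vectors. -/

noncomputable section

section EllNorm

variable {V : Type*} {p : ℝ}

def ellNorm (p : ℝ) (f : V → ℝ≥0∞) : ℝ≥0∞ := (∑' ξ, f ξ ^ p) ^ (1 / p)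

theorem ellNorm_mono (hp : 0 ≤ p) {f g : V → ℝ≥0∞} (h : ∀ ξ, f ξ ≤ g ξ) :
    ellNorm p f ≤ ellNorm p g := by
  unfold ellNorm
  gcongr with ξ
  exact h ξ

theorem ellNorm_const_mul (hp : 0 < p) (c : ℝ≥0∞) (f : V → ℝ≥0∞) :
    ellNorm p (fun ξ ↦ c * f ξ) = c * ellNorm p f := by
  simp only [ellNorm, ENNReal.mul_rpow_of_nonneg _ _ hp.le, ENNReal.tsum_mul_left]
  rw [ENNReal.mul_rpow_of_nonneg _ _ (one_div_pos.2 hp).le, one_div, ENNReal.rpow_rpow_inv hp.ne']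

theorem le_ellNorm (hp : 0 < p) (f : V → ℝ≥0∞) (ξ : V) : f ξ ≤ ellNorm p f := by
  calc f ξ = (f ξ ^ p) ^ (1 / p) := by rw [one_div, ENNReal.rpow_rpow_inv hp.ne']
    _ ≤ ellNorm p f := by unfold ellNorm; gcongr; exact ENNReal.le_tsum ξ

theorem ellNorm_eq_zero_iff (hp : 0 < p) {f : V → ℝ≥0∞} : ellNorm p f = 0 ↔ f = 0 := by
  rw [ellNorm, ENNReal.rpow_eq_zero_iff_of_pos (one_div_pos.2 hp)]
  simp [ENNReal.rpow_eq_zero_iff_of_pos hp, funext_iff]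

@[simp]
theorem ellNorm_zero (hp : 0 < p) : ellNorm p (0 : V → ℝ≥0∞) = 0 :=
  (ellNorm_eq_zero_iff hp).2 rfl

theorem ellNorm_single [DecidableEq V] (hp : 0 < p) (ξ : V) :
    ellNorm p (Pi.single ξ 1) = 1 := by
  have : (fun v ↦ (Pi.single ξ 1 : V → ℝ≥0∞) v ^ p) = Pi.single ξ 1 := by
    ext v
    by_cases h : v = ξ <;> simp [h, ENNReal.zero_rpow_of_pos hp]
  simp [ellNorm, this, tsum_pi_single]

end EllNorm

section SummationOperator

variable {V : Type*} [PartialOrder V] {p q : ℝ} {u w : V → ℝ≥0∞}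

def summationOp (u w f : V → ℝ≥0∞) (ξ : V) : ℝ≥0∞ :=
  w ξ * ∑' ξ' : {ξ' : V // ξ' ≤ ξ}, u ξ'.1 * f ξ'.1

theorem summationNorm_eq : summationNorm p q u w =
    sInf {C | ∀ f, ellNorm q (summationOp u w f) ≤ C * ellNorm p f} := rfl

@[simp]
theorem summationOp_zero : summationOp u w 0 = 0 := by
  ext ξ
  simp [summationOp]

theorem mul_le_summationNorm (hp : 0 < p) (hq : 0 < q) {ξ ξ' : V} (h : ξ' ≤ ξ) :
    w ξ * u ξ' ≤ summationNorm p q u w := by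
  classical
  refine le_sInf fun C hC ↦ ?_
  calc w ξ * u ξ' ≤ summationOp u w (Pi.single ξ' 1) ξ := by
        unfold summationOp
        gcongr
        simpa using ENNReal.le_tsum (f := fun σ : {σ : V // σ ≤ ξ} ↦
          u σ.1 * (Pi.single ξ' 1 : V → ℝ≥0∞) σ.1) ⟨ξ', h⟩
    _ ≤ ellNorm q (summationOp u w (Pi.single ξ' 1)) := le_ellNorm hq _ ξ
    _ ≤ C * ellNorm p (Pi.single ξ' 1) := hC _
    _ = C := by rw [ellNorm_single hp, mul_one]

theorem summationOp_eq_zero_of_summationNorm_eq_zero (hp : 0 < p) (hq : 0 < q)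
    (hS : summationNorm p q u w = 0) (f : V → ℝ≥0∞) : summationOp u w f = 0 := by
  ext ξ
  have hwu (σ : {σ : V // σ ≤ ξ}) : w ξ * u σ.1 = 0 :=
    nonpos_iff_eq_zero.1 (hS ▸ mul_le_summationNorm hp hq σ.2)
  simp [summationOp, ← ENNReal.tsum_mul_left, ← mul_assoc, hwu]

theorem ellNorm_summationOp_le (hp : 0 < p) (hq : 0 < q) (f : V → ℝ≥0∞) :
    ellNorm q (summationOp u w f) ≤ summationNorm p q u w * ellNorm p f := by
  obtain hS | hS := eq_or_ne (summationNorm p q u w) 0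
  · simp [summationOp_eq_zero_of_summationNorm_eq_zero hp hq hS, hq]
  obtain hf | hf := eq_or_ne (ellNorm p f) ⊤
  · simp [hf, hS]
  obtain hf₀ | hf₀ := eq_or_ne (ellNorm p f) 0
  · simp [(ellNorm_eq_zero_iff hp).1 hf₀, hq]
  rw [← ENNReal.div_le_iff_le_mul (.inl hf₀) (.inl hf), summationNorm_eq]
  exact le_sInf fun C hC ↦ (ENNReal.div_le_iff_le_mul (.inl hf₀) (.inl hf)).2 (hC f)

end SummationOperator

end

/-- If on a subtree `D` (with vertex set `V`, ordered by the tree order with minimal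
vertex `ξ*`) the local estimate
`‖f - P_{ξ*}f‖_{Y_q(F(ξ))} ≤ c₂ w(ξ) ∑_{ξ'≤ξ} u(ξ') ‖f‖_{X_p(F(ξ'))}` holds
(where `b ξ` and `a ξ` denote these piece norms), then by `ℓ_q`- and `ℓ_p`-additivity
`‖f - P_{ξ*}f‖_{Y_q(Ω_D)} ≤ c₂ · 𝔖^{p,q}_{D,u,w} · ‖f‖_{X_p(Ω_D)}`. -/
theorem summation_operator_bound {V : Type*} [PartialOrder V]
    (p q : ℝ) (hp : 1 < p) (hpq : p < q)
    (u w : V → ℝ≥0∞) (c₂ : ℝ≥0∞) (a b : V → ℝ≥0∞)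
    (hb : ∀ ξ : V, b ξ ≤ c₂ * w ξ * ∑' ξ' : {ξ' : V // ξ' ≤ ξ}, u ξ'.1 * a ξ'.1) :
    (∑' ξ : V, b ξ ^ q) ^ (1 / q) ≤
      c₂ * summationNorm p q u w * (∑' ξ : V, a ξ ^ p) ^ (1 / p) := by
  have hp₀ : 0 < p := one_pos.trans hp
  have hq₀ : 0 < q := hp₀.trans hpq
  calc ellNorm q b ≤ ellNorm q (fun ξ ↦ c₂ * summationOp u w a ξ) :=
        ellNorm_mono hq₀.le fun ξ ↦ (hb ξ).trans_eq (mul_assoc _ _ _)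
    _ = c₂ * ellNorm q (summationOp u w a) := ellNorm_const_mul hq₀ _ _
    _ ≤ c₂ * (summationNorm p q u w * ellNorm p a) := by
        gcongr
        exact ellNorm_summationOp_le hp₀ hq₀ a
    _ = c₂ * summationNorm p q u w * ellNorm p a := (mul_assoc _ _ _).symm
end
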